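/- For every finite simple graph G and every natural number k, the number of embeddings (injective homomorphisms) of the k-matching graph k·K₂ into the line graph L(G) is equal to the number of edge-injective homomorphisms from the wedge packing k·P₂ into G. -/

import Mathlib

/-!
An edge-injective homomorphism `ψ : k·P₂ → G` sends the two edges of the `i`-th wedge to
distinct edges of `G` through `ψ (i, 1)`, i.e. to adjacent vertices of `L(G)`, and edge-injectivity
makes the resulting homomorphism `k·K₂ → L(G)` injective. Conversely, two adjacent vertices of
`L(G)` are distinct edges sharing a vertex, hence of the form `s(x, v), s(v, z)` with `x ≠ z`, and
such a wedge `x, v, z` is unique. So the two constructions are mutually inverse.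
-/

open SimpleGraph

/-- A homomorphism `φ : H →g G` is *edge-injective* if distinct edges of `H`
are mapped to distinct edges of `G`. -/
def EdgeInjective {V W : Type*} {H : SimpleGraph V} {G : SimpleGraph W} (φ : H →g G) : Prop :=
  ∀ e ∈ H.edgeSet, ∀ f ∈ H.edgeSet, Sym2.map φ e = Sym2.map φ f → e = f

/-- `copies k H` is the disjoint union of `k` copies of the graph `H`. -/
def copies {V : Type*} (k : ℕ) (H : SimpleGraph V) : SimpleGraph (Fin k × V) where
  Adj x y := x.1 = y.1 ∧ H.Adj x.2 y.2
  symm := ⟨fun x y h => ⟨h.1.symm, h.2.symm⟩⟩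
  loopless := ⟨fun x h => H.loopless.irrefl _ h.2⟩

namespace SimpleGraph

variable {V W : Type*} {G : SimpleGraph V} {H : SimpleGraph W}

theorem edgeInjective_iff_injective_mapEdgeSet (ψ : H →g G) :
    EdgeInjective ψ ↔ Function.Injective ψ.mapEdgeSet := by
  refine ⟨fun hψ e f h => Subtype.ext (hψ e e.2 f f.2 (congrArg Subtype.val h)),
    fun hψ e he f hf h => congrArg Subtype.val (@hψ ⟨e, he⟩ ⟨f, hf⟩ (Subtype.ext h))⟩

def Hom.lineGraph (ψ : H →g G) (hψ : EdgeInjective ψ) : H.lineGraph →g G.lineGraph where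
  toFun := ψ.mapEdgeSet
  map_rel' {e f} h := by
    rw [lineGraph_adj_iff_exists] at h ⊢
    obtain ⟨hne, v, hve, hvf⟩ := h
    exact ⟨((edgeInjective_iff_injective_mapEdgeSet ψ).1 hψ).ne hne, ψ v,
      Sym2.mem_map.2 ⟨v, hve, rfl⟩, Sym2.mem_map.2 ⟨v, hvf, rfl⟩⟩

theorem Hom.lineGraph_injective {ψ : H →g G} (hψ : EdgeInjective ψ) :
    Function.Injective (ψ.lineGraph hψ) :=
  (edgeInjective_iff_injective_mapEdgeSet ψ).1 hψ

theorem pathGraph_adj_iff_exists {n : ℕ} {u v : Fin (n + 1)} :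
    (pathGraph (n + 1)).Adj u v ↔ ∃ j : Fin n, s(u, v) = s(j.castSucc, j.succ) := by
  simp only [pathGraph_adj, Sym2.eq_iff, Fin.ext_iff, Fin.val_castSucc, Fin.val_succ]
  constructor
  · rintro (h | h)
    · exact ⟨⟨u, by omega⟩, Or.inl ⟨rfl, h.symm⟩⟩
    · exact ⟨⟨v, by omega⟩, Or.inr ⟨h.symm, rfl⟩⟩
  · rintro ⟨j, h⟩
    omega

def pathGraphHomOfAdj {n : ℕ} (w : Fin (n + 1) → V)
    (hw : ∀ j : Fin n, G.Adj (w j.castSucc) (w j.succ)) : pathGraph (n + 1) →g G where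
  toFun := w
  map_rel' {u v} h := by
    obtain ⟨j, hj⟩ := pathGraph_adj_iff_exists.1 h
    rw [← mem_edgeSet, ← Sym2.map_mk, hj, Sym2.map_mk]
    exact hw j

theorem exists_pathGraph_three_hom_of_lineGraph_adj {e f : G.edgeSet}
    (h : G.lineGraph.Adj e f) : ∃ w : pathGraph 3 →g G, s(w 0, w 1) = e ∧ s(w 1, w 2) = f := by
  obtain ⟨-, v, hve, hvf⟩ := lineGraph_adj_iff_exists.1 h
  have he : s(Sym2.Mem.other hve, v) = e := Sym2.eq_swap.trans (Sym2.other_spec hve)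
  have hf : s(v, Sym2.Mem.other hvf) = f := Sym2.other_spec hvf
  have hxv : G.Adj (Sym2.Mem.other hve) v := by rw [← mem_edgeSet, he]; exact e.2
  have hvz : G.Adj v (Sym2.Mem.other hvf) := by rw [← mem_edgeSet, hf]; exact f.2
  refine ⟨pathGraphHomOfAdj ![Sym2.Mem.other hve, v, Sym2.Mem.other hvf] fun j => ?_, he, hf⟩
  fin_cases j
  exacts [hxv, hvz]

-- Distinct edges `s(a, b) ≠ s(b, c)` force `a ≠ c`, which pins down the middle vertex.
theorem pathGraph_three_hom_ext {w w' : pathGraph 3 →g G} (hne : s(w 0, w 1) ≠ s(w 1, w 2))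
    (h₀ : s(w 0, w 1) = s(w' 0, w' 1)) (h₁ : s(w 1, w 2) = s(w' 1, w' 2)) : w = w' := by
  have h02 : w 0 ≠ w 2 := fun h => hne (h ▸ Sym2.eq_swap)
  rw [Sym2.eq_iff] at h₀ h₁
  ext j
  fin_cases j <;> grind

section copies

variable {k : ℕ}

def copiesLift (f : Fin k → H →g G) : copies k H →g G where
  toFun p := f p.1 p.2
  map_rel' := by
    rintro ⟨i, a⟩ ⟨_, b⟩ ⟨rfl, h⟩
    exact (f i).map_adj h

def copiesIncl (i : Fin k) : H →g copies k H where
  toFun := Prod.mk i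
  map_rel' h := ⟨rfl, h⟩

theorem copies_hom_ext {ψ ψ' : copies k H →g G}
    (h : ∀ i, ψ.comp (copiesIncl i) = ψ'.comp (copiesIncl i)) : ψ = ψ' := by
  ext ⟨i, a⟩
  exact DFunLike.congr_fun (h i) a

variable {n : ℕ}

def copiesPathEdge (p : Fin k × Fin n) : (copies k (pathGraph (n + 1))).edgeSet :=
  ⟨s((p.1, p.2.castSucc), (p.1, p.2.succ)), rfl, pathGraph_adj_iff_exists.2 ⟨p.2, rfl⟩⟩

theorem copiesPathEdge_injective : Function.Injective (copiesPathEdge (k := k) (n := n)) := by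
  rintro ⟨i, a⟩ ⟨i', b⟩ h
  have h := congrArg Subtype.val h
  simp only [copiesPathEdge, Sym2.eq_iff, Prod.mk.injEq, Fin.ext_iff, Fin.val_castSucc,
    Fin.val_succ] at h ⊢
  omega

theorem copiesPathEdge_surjective : Function.Surjective (copiesPathEdge (k := k) (n := n)) := by
  rintro ⟨e, he⟩
  induction e using Sym2.ind with
  | h p q =>
    obtain ⟨i, a⟩ := p
    obtain ⟨i', b⟩ := q
    obtain ⟨rfl : i = i', hadj : (pathGraph (n + 1)).Adj a b⟩ := he
    obtain ⟨j, hj⟩ := pathGraph_adj_iff_exists.1 hadj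
    refine ⟨(i, j), Subtype.ext ?_⟩
    have := congrArg (Sym2.map (Prod.mk i)) hj
    rw [Sym2.map_mk, Sym2.map_mk] at this
    exact this.symm

def copiesPathEdgeHom : copies k (pathGraph n) →g (copies k (pathGraph (n + 1))).lineGraph where
  toFun := copiesPathEdge
  map_rel' := by
    rintro ⟨i, a⟩ ⟨_, b⟩ ⟨rfl, h⟩
    refine lineGraph_adj_iff_exists.2
      ⟨copiesPathEdge_injective.ne fun hab => h.ne (congrArg Prod.snd hab), ?_⟩
    rw [pathGraph_adj] at h
    rcases h with h | h
    · refine ⟨(i, a.succ), Sym2.mem_mk_right _ _, ?_⟩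
      rw [show a.succ = b.castSucc by ext; simp [h]]
      exact Sym2.mem_mk_left _ _
    · refine ⟨(i, a.castSucc), Sym2.mem_mk_left _ _, ?_⟩
      rw [show a.castSucc = b.succ by ext; simp [h]]
      exact Sym2.mem_mk_right _ _

def lineGraphHomOfEdgeInjective (ψ : copies k (pathGraph (n + 1)) →g G) (hψ : EdgeInjective ψ) :
    copies k (pathGraph n) →g G.lineGraph :=
  (ψ.lineGraph hψ).comp copiesPathEdgeHom

theorem copies_pathGraph_three_hom_ext {ψ ψ' : copies k (pathGraph 3) →g G}
    (hψ : EdgeInjective ψ)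
    (h : ∀ p, ψ.mapEdgeSet (copiesPathEdge p) = ψ'.mapEdgeSet (copiesPathEdge p)) : ψ = ψ' := by
  rw [edgeInjective_iff_injective_mapEdgeSet] at hψ
  refine copies_hom_ext fun i => pathGraph_three_hom_ext ?_ (congrArg Subtype.val (h (i, 0)))
    (congrArg Subtype.val (h (i, 1)))
  have h01 : (i, (0 : Fin 2)) ≠ (i, 1) := by simp
  exact Subtype.coe_ne_coe.2 ((hψ.comp copiesPathEdge_injective).ne h01)

theorem copies_pathGraph_two_adj (i : Fin k) : (copies k (pathGraph 2)).Adj (i, 0) (i, 1) :=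
  ⟨rfl, by simp [pathGraph_adj]⟩

noncomputable def wedgePackingOfLineGraphHom (φ : copies k (pathGraph 2) →g G.lineGraph) :
    copies k (pathGraph 3) →g G :=
  copiesLift fun i =>
    (exists_pathGraph_three_hom_of_lineGraph_adj (φ.map_adj (copies_pathGraph_two_adj i))).choose

theorem mapEdgeSet_wedgePackingOfLineGraphHom (φ : copies k (pathGraph 2) →g G.lineGraph)
    (p : Fin k × Fin 2) : (wedgePackingOfLineGraphHom φ).mapEdgeSet (copiesPathEdge p) = φ p := by
  obtain ⟨i, j⟩ := p
  obtain ⟨h₀, h₁⟩ := (exists_pathGraph_three_hom_of_lineGraph_adj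
    (φ.map_adj (copies_pathGraph_two_adj i))).choose_spec
  apply Subtype.ext
  fin_cases j
  exacts [h₀, h₁]

theorem edgeInjective_wedgePackingOfLineGraphHom {φ : copies k (pathGraph 2) →g G.lineGraph}
    (hφ : Function.Injective φ) : EdgeInjective (wedgePackingOfLineGraphHom φ) := by
  rw [edgeInjective_iff_injective_mapEdgeSet]
  intro e f hef
  obtain ⟨p, rfl⟩ := copiesPathEdge_surjective e
  obtain ⟨q, rfl⟩ := copiesPathEdge_surjective f
  rw [mapEdgeSet_wedgePackingOfLineGraphHom, mapEdgeSet_wedgePackingOfLineGraphHom] at hef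
  rw [hφ hef]

noncomputable def edgeInjectiveWedgePackingEquiv (G : SimpleGraph V) (k : ℕ) :
    {ψ : copies k (pathGraph 3) →g G // EdgeInjective ψ} ≃
      {φ : copies k (pathGraph 2) →g G.lineGraph // Function.Injective φ} where
  toFun ψ := ⟨lineGraphHomOfEdgeInjective ψ.1 ψ.2,
    (Hom.lineGraph_injective ψ.2).comp copiesPathEdge_injective⟩
  invFun φ := ⟨wedgePackingOfLineGraphHom φ, edgeInjective_wedgePackingOfLineGraphHom φ.2⟩
  left_inv ψ := Subtype.ext <| Eq.symm <| copies_pathGraph_three_hom_ext ψ.2 fun p =>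
    (mapEdgeSet_wedgePackingOfLineGraphHom (lineGraphHomOfEdgeInjective ψ.1 ψ.2) p).symm
  right_inv φ := Subtype.ext (RelHom.ext (mapEdgeSet_wedgePackingOfLineGraphHom φ.1))

end copies

end SimpleGraph

theorem matchings_in_lineGraph_eq_edgeInjective_wedgePackings
    {V : Type*} (G : SimpleGraph V) (k : ℕ) :
    Nat.card {φ : copies k (pathGraph 2) →g G.lineGraph // Function.Injective ⇑φ} =
      Nat.card {φ : copies k (pathGraph 3) →g G // EdgeInjective φ} :=
  (Nat.card_congr (edgeInjectiveWedgePackingEquiv G k)).symm
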